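/- arXiv:2109.05290 — 7 statements merged into one kernel-verified Lean document; each statement's English description precedes it below -/
import Mathlib

section
/- Let G_1 and G_2 be finite Σ-labeled graphs such that the labeled direct product G_1 ⊗ G_2 is acyclic and has at least one vertex. Then the maximum length of a string occurring in both G_1 and G_2 exists and equals one plus the maximum length of a walk in G_1 ⊗ G_2; moreover, a longest common string of G_1 and G_2 is exactly the spelling of a maximum-length walk of G_1 ⊗ G_2. -/
/-- A (finite) walk in a labeled graph with edge relation `E`. -/
def IsWalk {V : Type*} (E : V → V → Prop) (p : List V) : Prop :=
  p ≠ [] ∧ p.Chain' E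

/-- A string `S ∈ Σ⁺` occurs in the graph `(V,E,L)` if some walk spells it. -/
def Occurs {V σ : Type*} (E : V → V → Prop) (L : V → σ) (S : List σ) : Prop :=
  ∃ p : List V, IsWalk E p ∧ p.map L = S

/-- Vertex set of the labeled direct product: pairs with matching labels. -/
def ProdV {V₁ V₂ σ : Type*} (L₁ : V₁ → σ) (L₂ : V₂ → σ) (q : V₁ × V₂) : Prop :=
  L₁ q.1 = L₂ q.2

/-- Edge relation of the labeled direct product. -/
def ProdE {V₁ V₂ σ : Type*} (E₁ : V₁ → V₁ → Prop) (E₂ : V₂ → V₂ → Prop)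
    (L₁ : V₁ → σ) (L₂ : V₂ → σ) (q q' : V₁ × V₂) : Prop :=
  ProdV L₁ L₂ q ∧ ProdV L₁ L₂ q' ∧ E₁ q.1 q'.1 ∧ E₂ q.2 q'.2

/-- A walk in the labeled direct product graph. -/
def IsProdWalk {V₁ V₂ σ : Type*} (E₁ : V₁ → V₁ → Prop) (E₂ : V₂ → V₂ → Prop)
    (L₁ : V₁ → σ) (L₂ : V₂ → σ) (q : List (V₁ × V₂)) : Prop :=
  q ≠ [] ∧ (∀ x ∈ q, ProdV L₁ L₂ x) ∧ q.Chain' (ProdE E₁ E₂ L₁ L₂)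

/-- Zipping two walks with equal spellings gives a product walk. -/
lemma zip_aux {V₁ V₂ σ : Type*} (E₁ : V₁ → V₁ → Prop) (E₂ : V₂ → V₂ → Prop)
    (L₁ : V₁ → σ) (L₂ : V₂ → σ) :
    ∀ (p₁ : List V₁) (p₂ : List V₂), p₁.map L₁ = p₂.map L₂ →
      p₁.Chain' E₁ → p₂.Chain' E₂ →
      (∀ x ∈ p₁.zip p₂, ProdV L₁ L₂ x) ∧ (p₁.zip p₂).Chain' (ProdE E₁ E₂ L₁ L₂)
  | [], [], _, _, _ => by simp; exact List.isChain_nil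
  | [], b :: p₂, h, _, _ => by simp at h
  | a :: p₁, [], h, _, _ => by simp at h
  | a :: p₁, b :: p₂, h, h₁, h₂ => by
    simp only [List.map_cons, List.cons.injEq] at h
    obtain ⟨hab, h⟩ := h
    obtain ⟨ih1, ih2⟩ := zip_aux E₁ E₂ L₁ L₂ p₁ p₂ h h₁.tail h₂.tail
    refine ⟨?_, ?_⟩
    · intro x hx
      rcases List.mem_cons.1 hx with rfl | hx
      · exact hab
      · exact ih1 x hx
    · rw [List.zip_cons_cons, List.Chain', List.isChain_cons]
      refine ⟨?_, ih2⟩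
      intro y hy
      match p₁, p₂, h, h₁, h₂ with
      | [], _, _, _, _ => simp at hy
      | c :: p₁, [], h, _, _ => simp at h
      | c :: p₁, d :: p₂, h, h₁, h₂ =>
        simp only [List.zip_cons_cons, List.head?_cons, Option.mem_def,
          Option.some.injEq] at hy
        subst hy
        exact ⟨hab, ih1 (c, d) (by simp), (List.isChain_cons_cons.1 h₁).1,
          (List.isChain_cons_cons.1 h₂).1⟩

theorem stmt7 {V₁ V₂ σ : Type*} [Fintype V₁] [Fintype V₂]
    (E₁ : V₁ → V₁ → Prop) (E₂ : V₂ → V₂ → Prop) (L₁ : V₁ → σ) (L₂ : V₂ → σ)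
    (hacyc : ¬ ∃ q : List (V₁ × V₂), IsProdWalk E₁ E₂ L₁ L₂ q ∧ 2 ≤ q.length ∧
      q.head? = q.getLast?)
    (hne : ∃ x : V₁ × V₂, ProdV L₁ L₂ x) :
    ∃ N : ℕ, 0 < N ∧
      (∃ S : List σ, Occurs E₁ L₁ S ∧ Occurs E₂ L₂ S ∧ S.length = N) ∧
      (∀ S : List σ, Occurs E₁ L₁ S → Occurs E₂ L₂ S → S.length ≤ N) ∧
      (∃ q : List (V₁ × V₂), IsProdWalk E₁ E₂ L₁ L₂ q ∧ q.length = N) ∧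
      (∀ q : List (V₁ × V₂), IsProdWalk E₁ E₂ L₁ L₂ q → q.length ≤ N) ∧
      (∀ S : List σ,
        (Occurs E₁ L₁ S ∧ Occurs E₂ L₂ S ∧ S.length = N) ↔
        (∃ q : List (V₁ × V₂), IsProdWalk E₁ E₂ L₁ L₂ q ∧ q.length = N ∧
          (q.map fun x => L₁ x.1) = S)) := by
  classical
  obtain ⟨x, hx⟩ := hne
  set C := Fintype.card (V₁ × V₂) with hC
  -- bound on walk lengths via acyclicity and pigeonhole
  have hbound : ∀ q : List (V₁ × V₂), IsProdWalk E₁ E₂ L₁ L₂ q → q.length ≤ C := by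
    intro q hq
    by_contra hlen
    push_neg at hlen
    have key : ∀ i j : ℕ, i < j → j < q.length → q[i]? = q[j]? → False := by
      intro i j hij hj hgij
      set r : List (V₁ × V₂) := (q.drop i).take (j - i + 1) with hr
      have hrinf : r <:+: q := ((q.drop i).take_prefix (j - i + 1)).isInfix.trans
        (q.drop_suffix i).isInfix
      have hrlen : r.length = j - i + 1 := by
        rw [hr, List.length_take, List.length_drop]
        omega
      have hrhead : r.head? = q[i]? := by
        rw [List.head?_eq_getElem?, hr, List.getElem?_take_of_lt (by omega),
          List.getElem?_drop, Nat.add_zero]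
      have hrlast : r.getLast? = q[j]? := by
        rw [List.getLast?_eq_getElem?, hrlen, hr,
          List.getElem?_take_of_lt (by omega), List.getElem?_drop]
        congr 1
        omega
      refine hacyc ⟨r, ⟨?_, ?_, hq.2.2.infix hrinf⟩, by omega, ?_⟩
      · intro h
        rw [h] at hrlen; simp at hrlen
      · intro y hy
        exact hq.2.1 y (hrinf.sublist.subset hy)
      · rw [hrhead, hrlast, hgij]
    obtain ⟨i, j, hij, hget⟩ :=
      Fintype.exists_ne_map_eq_of_card_lt (fun k : Fin q.length => q.get k)
        (by rw [Fintype.card_fin]; exact hlen)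
    have hget' : q[(i : ℕ)]? = q[(j : ℕ)]? := by
      rw [List.getElem?_eq_getElem i.isLt, List.getElem?_eq_getElem j.isLt]
      simpa [List.get_eq_getElem] using hget
    rcases lt_or_gt_of_ne (Fin.val_ne_of_ne hij) with hlt | hlt
    · exact key i j hlt j.isLt hget'
    · exact key j i hlt i.isLt hget'.symm
  -- from a product walk to occurrences in both graphs
  have walkToOccurs : ∀ q : List (V₁ × V₂), IsProdWalk E₁ E₂ L₁ L₂ q →
      Occurs E₁ L₁ (q.map fun y => L₁ y.1) ∧ Occurs E₂ L₂ (q.map fun y => L₁ y.1) := by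
    rintro q ⟨hqne, hqmem, hqch⟩
    constructor
    · refine ⟨q.map Prod.fst, ⟨by simpa using hqne, ?_⟩, by simp [List.map_map]⟩
      exact (List.isChain_map Prod.fst).2 (hqch.imp fun a b h => h.2.2.1)
    · refine ⟨q.map Prod.snd, ⟨by simpa using hqne, ?_⟩, ?_⟩
      · exact (List.isChain_map Prod.snd).2 (hqch.imp fun a b h => h.2.2.2)
      · rw [List.map_map]
        exact List.map_congr_left fun y hy => (hqmem y hy).symm
  -- from common occurrences to a product walk
  have occursToWalk : ∀ S : List σ, Occurs E₁ L₁ S → Occurs E₂ L₂ S →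
      ∃ q : List (V₁ × V₂), IsProdWalk E₁ E₂ L₁ L₂ q ∧ q.length = S.length ∧
        (q.map fun y => L₁ y.1) = S := by
    rintro S ⟨p₁, ⟨hp₁ne, hp₁c⟩, hp₁s⟩ ⟨p₂, ⟨hp₂ne, hp₂c⟩, hp₂s⟩
    have hmap : p₁.map L₁ = p₂.map L₂ := hp₁s.trans hp₂s.symm
    have hlen₁ : p₁.length = S.length := by rw [← hp₁s, List.length_map]
    have hlen₂ : p₂.length = S.length := by rw [← hp₂s, List.length_map]
    obtain ⟨hmem, hch⟩ := zip_aux E₁ E₂ L₁ L₂ p₁ p₂ hmap hp₁c hp₂c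
    have hzlen : (p₁.zip p₂).length = S.length := by
      rw [List.length_zip]; omega
    refine ⟨p₁.zip p₂, ⟨?_, hmem, hch⟩, hzlen, ?_⟩
    · intro h
      rw [h] at hzlen
      simp only [List.length_nil] at hzlen
      exact hp₁ne (List.length_eq_zero_iff.1 (by omega))
    · have : (p₁.zip p₂).map Prod.fst = p₁ := List.map_fst_zip (by omega)
      calc (p₁.zip p₂).map (fun y => L₁ y.1)
          = ((p₁.zip p₂).map Prod.fst).map L₁ := by rw [List.map_map]; rfl
        _ = p₁.map L₁ := by rw [this]
        _ = S := hp₁s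
  -- define N as the greatest walk length
  set P : ℕ → Prop := fun n => ∃ q : List (V₁ × V₂),
    IsProdWalk E₁ E₂ L₁ L₂ q ∧ q.length = n with hPdef
  have hP1 : P 1 := by
    refine ⟨[x], ⟨by simp, ?_, List.isChain_singleton x⟩, rfl⟩
    intro y hy
    rcases List.mem_singleton.1 hy with rfl
    exact hx
  have h1C : 1 ≤ C := by
    have : Nonempty (V₁ × V₂) := ⟨x⟩
    exact Fintype.card_pos
  set N := Nat.findGreatest P C with hNdef
  have hN1 : 1 ≤ N := Nat.le_findGreatest h1C hP1
  have hPN : P N := Nat.findGreatest_spec h1C hP1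
  have hmax : ∀ q : List (V₁ × V₂), IsProdWalk E₁ E₂ L₁ L₂ q → q.length ≤ N :=
    fun q hq => Nat.le_findGreatest (hbound q hq) ⟨q, hq, rfl⟩
  refine ⟨N, hN1, ?_, ?_, hPN, hmax, ?_⟩
  · obtain ⟨q, hq, hqlen⟩ := hPN
    obtain ⟨o1, o2⟩ := walkToOccurs q hq
    exact ⟨_, o1, o2, by simpa using hqlen⟩
  · intro S h1 h2
    obtain ⟨q, hq, hql, _⟩ := occursToWalk S h1 h2
    rw [← hql]
    exact hmax q hq
  · intro S
    constructor
    · rintro ⟨h1, h2, hlen⟩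
      obtain ⟨q, hq, hql, hqs⟩ := occursToWalk S h1 h2
      exact ⟨q, hq, by omega, hqs⟩
    · rintro ⟨q, hq, hql, rfl⟩
      obtain ⟨o1, o2⟩ := walkToOccurs q hq
      exact ⟨o1, o2, by simpa using hql⟩
end

section
/- Let G = (V,E,L) be a finite Σ-labeled graph. There is an infinite repeated string occurring in G if and only if there exist finite sequences of vertices r, r' of the same length (possibly empty) and nonempty finite sequences of vertices s, s' of the same length, with L(r) = L(r') and L(s) = L(s'), such that the ultimately periodic infinite sequences r s^ω and r' s'^ω are two distinct infinite walks in G (necessarily both spelling the infinite string R S^ω, where R = L(r) and S = L(s)). -/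
/-- An infinite walk in a labeled graph with edge relation `E`. -/
def IsInfWalk {V : Type*} (E : V → V → Prop) (p : ℕ → V) : Prop :=
  ∀ i, E (p i) (p (i + 1))

/-- `p` is the ultimately periodic infinite sequence `r s^ω`: it starts with
the finite sequence `r` and then repeats the (nonempty) finite sequence `s`
forever. (Since the relevant indices are always in range, the default value
`p 0` of `getD` is never used.) -/
def EqUltPeriodic {V : Type*} (r s : List V) (p : ℕ → V) : Prop :=
  (∀ i, i < r.length → p i = r.getD i (p 0)) ∧
  (∀ i, p (r.length + i) = s.getD (i % s.length) (p 0))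

/-- Lasso-shaped modification of `p`: follow `p` up to `m`, then loop on
the segment from `m` to `m + n`. -/
def extSeq {V : Type*} (p : ℕ → V) (m n : ℕ) : ℕ → V :=
  fun i => if i < m then p i else p (m + (i - m) % n)

lemma extSeq_le {V : Type*} (p : ℕ → V) (m n i : ℕ) (h : i ≤ m) :
    extSeq p m n i = p i := by
  unfold extSeq
  rcases lt_or_eq_of_le h with h | h
  · simp [h]
  · subst h; simp

lemma extSeq_ge {V : Type*} (p : ℕ → V) (m n i : ℕ) (h : m ≤ i) :
    extSeq p m n i = p (m + (i - m) % n) := by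
  unfold extSeq
  rw [if_neg (Nat.not_lt.mpr h)]

lemma cyc_edge {V : Type*} {E : V → V → Prop} {p : ℕ → V} (hp : IsInfWalk E p)
    {m n : ℕ} (hn : 0 < n) (hcyc : p m = p (m + n)) (k : ℕ) :
    E (p (m + k % n)) (p (m + (k + 1) % n)) := by
  have ha : k % n < n := Nat.mod_lt _ hn
  have he := hp (m + k % n)
  have hmod : (k + 1) % n = (k % n + 1) % n := by
    conv_lhs => rw [← Nat.mod_add_mod]
  rcases eq_or_lt_of_le (Nat.succ_le_of_lt ha) with h | h
  · have h0 : (k + 1) % n = 0 := by rw [hmod, show k % n + 1 = n from h, Nat.mod_self]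
    rw [show m + k % n + 1 = m + n from by omega] at he
    rw [← hcyc] at he
    rw [h0]
    simpa using he
  · rw [hmod, Nat.mod_eq_of_lt h]
    rw [show m + k % n + 1 = m + (k % n + 1) from by omega] at he
    exact he

lemma extSeq_walk {V : Type*} {E : V → V → Prop} {p : ℕ → V} (hp : IsInfWalk E p)
    (m : ℕ) {n : ℕ} (hn : 0 < n) (hcyc : p m = p (m + n)) :
    IsInfWalk E (extSeq p m n) := by
  intro i
  rcases le_or_gt (i + 1) m with h | h
  · rw [extSeq_le p m n i (by omega), extSeq_le p m n (i + 1) h]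
    exact hp i
  · have hi : m ≤ i := by omega
    rw [extSeq_ge p m n i hi, extSeq_ge p m n (i + 1) (by omega),
        show i + 1 - m = (i - m) + 1 from by omega]
    exact cyc_edge hp hn hcyc (i - m)

lemma extSeq_periodic {V : Type*} (p : ℕ → V) (m : ℕ) {n : ℕ} (hn : 0 < n) :
    EqUltPeriodic ((List.range m).map p) ((List.range n).map (fun j => p (m + j)))
      (extSeq p m n) := by
  constructor
  · intro i hi
    simp only [List.length_map, List.length_range] at hi
    rw [extSeq_le p m n i (le_of_lt hi),
        List.getD_eq_getElem _ _ (by simpa using hi)]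
    simp
  · intro i
    simp only [List.length_map, List.length_range]
    have hlt : i % n < n := Nat.mod_lt _ hn
    rw [extSeq_ge p m n (m + i) (by omega),
        List.getD_eq_getElem _ _ (by simpa using hlt)]
    simp

lemma forward_aux {V σ : Type*} (E : V → V → Prop) (L : V → σ) (p p' : ℕ → V)
    (hp : IsInfWalk E p) (hp' : IsInfWalk E p') (hL : ∀ i, L (p i) = L (p' i))
    (i0 a b : ℕ) (hab : a < b) (hne : p i0 ≠ p' i0)
    (h1 : p (i0 + a) = p (i0 + b)) (h2 : p' (i0 + a) = p' (i0 + b)) :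
    (∃ (r r' s s' : List V) (q q' : ℕ → V),
      r.length = r'.length ∧ s ≠ [] ∧ s.length = s'.length ∧
      r.map L = r'.map L ∧ s.map L = s'.map L ∧
      EqUltPeriodic r s q ∧ EqUltPeriodic r' s' q' ∧
      IsInfWalk E q ∧ IsInfWalk E q' ∧ (∃ i, q i ≠ q' i)) := by
  set m := i0 + a with hm
  set n := b - a with hnn
  have hn : 0 < n := by omega
  have hcyc : p m = p (m + n) := by
    rw [show m + n = i0 + b from by omega]; exact h1
  have hcyc' : p' m = p' (m + n) := by
    rw [show m + n = i0 + b from by omega]; exact h2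
  refine ⟨(List.range m).map p, (List.range m).map p',
    (List.range n).map (fun j => p (m + j)), (List.range n).map (fun j => p' (m + j)),
    extSeq p m n, extSeq p' m n, by simp, ?_, by simp, ?_, ?_,
    extSeq_periodic p m hn, extSeq_periodic p' m hn,
    extSeq_walk hp m hn hcyc, extSeq_walk hp' m hn hcyc', ?_⟩
  · simp [List.range_eq_nil, hn.ne']
  · rw [List.map_map, List.map_map]
    exact List.map_congr_left (fun x _ => hL x)
  · rw [List.map_map, List.map_map]
    exact List.map_congr_left (fun x _ => hL (m + x))
  · refine ⟨i0, ?_⟩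
    rw [extSeq_le p m n i0 (by omega), extSeq_le p' m n i0 (by omega)]
    exact hne

/-- a finite labeled graph `G` has an infinite repeated string
iff there are finite vertex sequences `r, r'` of the same length and nonempty
finite vertex sequences `s, s'` of the same length, with `L(r) = L(r')` and
`L(s) = L(s')`, such that `r s^ω` and `r' s'^ω` are two distinct infinite
walks of `G` (which then necessarily both spell `R S^ω` with `R = L(r)`,
`S = L(s)`). -/
theorem stmt10 {V σ : Type*} [Fintype V] (E : V → V → Prop) (L : V → σ) :
    (∃ p p' : ℕ → V, IsInfWalk E p ∧ IsInfWalk E p' ∧ (∃ i, p i ≠ p' i) ∧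
      ∀ i, L (p i) = L (p' i)) ↔
    (∃ (r r' s s' : List V) (p p' : ℕ → V),
      r.length = r'.length ∧ s ≠ [] ∧ s.length = s'.length ∧
      r.map L = r'.map L ∧ s.map L = s'.map L ∧
      EqUltPeriodic r s p ∧ EqUltPeriodic r' s' p' ∧
      IsInfWalk E p ∧ IsInfWalk E p' ∧ (∃ i, p i ≠ p' i)) := by
  constructor
  · rintro ⟨p, p', hp, hp', ⟨i0, hne⟩, hL⟩
    obtain ⟨a, b, hab, hfab⟩ :=
      Finite.exists_ne_map_eq_of_infinite (fun k : ℕ => (p (i0 + k), p' (i0 + k)))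
    have h1 : p (i0 + a) = p (i0 + b) := congrArg Prod.fst hfab
    have h2 : p' (i0 + a) = p' (i0 + b) := congrArg Prod.snd hfab
    rcases hab.lt_or_gt with h | h
    · exact forward_aux E L p p' hp hp' hL i0 a b h hne h1 h2
    · exact forward_aux E L p p' hp hp' hL i0 b a h hne h1.symm h2.symm
  · rintro ⟨r, r', s, s', p, p', hrl, hs, hsl, hrL, hsL, ⟨hp1, hp2⟩, ⟨hp'1, hp'2⟩,
      hp, hp', hne⟩
    refine ⟨p, p', hp, hp', hne, ?_⟩
    intro i
    rcases lt_or_ge i r.length with h | h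
    · have h' : i < r'.length := hrl ▸ h
      rw [hp1 i h, hp'1 i h', List.getD_eq_getElem _ _ h, List.getD_eq_getElem _ _ h']
      have h9 : (r[i]?).map L = (r'[i]?).map L := by
        rw [← List.getElem?_map, ← List.getElem?_map, hrL]
      rw [List.getElem?_eq_getElem h, List.getElem?_eq_getElem h'] at h9
      simpa using h9
    · obtain ⟨j, rfl⟩ : ∃ j, i = r.length + j := ⟨i - r.length, by omega⟩
      have hs0 : 0 < s.length := List.length_pos_iff.mpr hs
      have hm : j % s.length < s.length := Nat.mod_lt _ hs0
      have hm' : j % s.length < s'.length := hsl ▸ hm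
      rw [hp2 j, show r.length + j = r'.length + j from by rw [hrl], hp'2 j, ← hsl,
          List.getD_eq_getElem _ _ hm, List.getD_eq_getElem _ _ hm']
      have h9 : (s[j % s.length]?).map L = (s'[j % s.length]?).map L := by
        rw [← List.getElem?_map, ← List.getElem?_map, hsL]
      rw [List.getElem?_eq_getElem hm, List.getElem?_eq_getElem hm'] at h9
      simpa using h9
end

section
/- Let G = (V,E,L) be a finite Σ-labeled graph and let G ⊗ G = (V',E',L') be its labeled direct self-product. Then G has an infinite repeated string if and only if some vertex q ∈ V'_diff reaches (possibly by an empty path) some vertex q' ∈ V'_cyc. Moreover, in that case, if R is the spelling of a walk from q to q' (with the last character removed, and R = ε if q = q') and S is the spelling of a closed walk of positive length starting and ending at q' (with the last character removed), then R S^ω is an infinite repeated string of G. -/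
/-- `x ∈ V'_cyc`: `x` lies on a closed walk of positive length of `G ⊗ G`. -/
def OnCycleP {V σ : Type*} (E : V → V → Prop) (L : V → σ) (x : V × V) : Prop :=
  ∃ c : List (V × V), IsProdWalk E E L L c ∧ 2 ≤ c.length ∧
    c.head? = c.getLast? ∧ x ∈ c

/-- The ultimately periodic infinite string `R S^ω` (as a function `ℕ → σ`);
the default `d` of `getD` is never used when `S` is nonempty. -/
def UPChar {σ : Type*} (R S : List σ) (d : σ) (i : ℕ) : σ :=
  if i < R.length then R.getD i d else S.getD ((i - R.length) % S.length) d




section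
variable {A : Type*} {E : A → A → Prop}

lemma chain'_getElem {l : List A} (h : l.Chain' E) {i : ℕ} (hi : i + 1 < l.length) :
    E l[i] l[i+1] := by
  have := List.isChain_iff_getElem.mp h i (by omega)
  simpa using this

lemma cyc_infWalk {l : List A} (hne : l ≠ [])
    (hch : l.Chain' E) (hlast : E (l.getLast hne) (l.head hne)) (d : A) :
    IsInfWalk E (fun i => l.getD (i % l.length) d) := by
  intro i
  have hlen : 0 < l.length := List.length_pos_iff.mpr hne
  have hj : i % l.length < l.length := Nat.mod_lt _ hlen
  have key : (i + 1) % l.length = (i % l.length + 1) % l.length :=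
    (Nat.mod_add_mod i l.length 1).symm
  simp only
  rcases Nat.lt_or_ge (i % l.length + 1) l.length with h | h
  · have h1 : (i + 1) % l.length = i % l.length + 1 := by
      rw [key, Nat.mod_eq_of_lt h]
    rw [h1, List.getD_eq_getElem _ _ hj, List.getD_eq_getElem _ _ h]
    exact chain'_getElem hch h
  · have hj' : i % l.length = l.length - 1 := by omega
    have h1 : (i + 1) % l.length = 0 := by
      rw [key, hj']
      simp [Nat.sub_add_cancel hlen]
    rw [h1, hj', List.getD_eq_getElem _ _ (by omega), List.getD_eq_getElem _ _ hlen]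
    rwa [← List.getLast_eq_getElem hne, ← List.head_eq_getElem hne]

lemma pref_infWalk {r : List A} {g : ℕ → A} (hg : IsInfWalk E g)
    (hch : r.Chain' E) (hjoin : ∀ h : r ≠ [], E (r.getLast h) (g 0)) (d : A) :
    IsInfWalk E (fun i => if i < r.length then r.getD i d else g (i - r.length)) := by
  intro i
  simp only
  rcases Nat.lt_or_ge (i + 1) r.length with h | h
  · rw [if_pos (by omega), if_pos h, List.getD_eq_getElem _ _ (by omega),
      List.getD_eq_getElem _ _ h]
    exact chain'_getElem hch h
  · rcases Nat.lt_or_ge i r.length with h2 | h2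
    · have hi : i = r.length - 1 := by omega
      have hne : r ≠ [] := by rw [← List.length_pos_iff]; omega
      rw [if_pos h2, if_neg (by omega), List.getD_eq_getElem _ _ h2]
      have : i + 1 - r.length = 0 := by omega
      rw [this]
      have h3 := hjoin hne
      rw [List.getLast_eq_getElem hne] at h3
      convert h3 using 2
    · rw [if_neg (by omega), if_neg (by omega)]
      have : i + 1 - r.length = (i - r.length) + 1 := by omega
      rw [this]
      exact hg _

lemma infWalk_shift {f : ℕ → A} (hf : IsInfWalk E f) (k : ℕ) :
    IsInfWalk E (fun i => f (k + i)) := by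
  intro i
  have := hf (k + i)
  simpa [Nat.add_assoc] using this

lemma infWalk_reflTransGen {f : ℕ → A} (hf : IsInfWalk E f) (i : ℕ) :
    ∀ k, Relation.ReflTransGen E (f i) (f (i + k)) := by
  intro k
  induction k with
  | zero => exact Relation.ReflTransGen.refl
  | succ n ih => exact ih.tail (hf (i + n))

end
section product
variable {V σ : Type*} {E : V → V → Prop} {L : V → σ}

lemma prod_to_two {f : ℕ → V × V} (hf : IsInfWalk (ProdE E E L L) f)
    (hne : (f 0).1 ≠ (f 0).2) :
    ∃ p p' : ℕ → V, IsInfWalk E p ∧ IsInfWalk E p' ∧ (∃ i, p i ≠ p' i) ∧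
      ∀ i, L (p i) = L (p' i) := by
  refine ⟨fun i => (f i).1, fun i => (f i).2, fun i => (hf i).2.2.1,
    fun i => (hf i).2.2.2, ⟨0, hne⟩, fun i => (hf i).1⟩

lemma cycle_inf {x : V × V} (h : OnCycleP E L x) :
    ∃ f : ℕ → V × V, IsInfWalk (ProdE E E L L) f ∧ f 0 = x := by
  obtain ⟨cc, hc, hlen, hhl, hmem⟩ := h
  have hcne : cc ≠ [] := by rw [← List.length_pos_iff]; omega
  have hslen : cc.dropLast.length = cc.length - 1 := List.length_dropLast
  have hsne : cc.dropLast ≠ [] := by rw [← List.length_pos_iff]; omega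
  have h01 : cc[0]'(by omega) = cc[cc.length - 1]'(by omega) := by
    have := hhl
    rw [List.head?_eq_head hcne, List.getLast?_eq_getLast hcne,
      List.head_eq_getElem, List.getLast_eq_getElem] at this
    exact Option.some_injective _ this
  have hsch : cc.dropLast.Chain' (ProdE E E L L) :=
    hc.2.2.prefix (List.dropLast_prefix cc)
  have hedge : ProdE E E L L (cc.dropLast.getLast hsne) (cc.dropLast.head hsne) := by
    rw [List.getLast_eq_getElem, List.head_eq_getElem, List.getElem_dropLast,
      List.getElem_dropLast]
    have h2 : cc.dropLast.length - 1 + 1 = cc.length - 1 := by omega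
    have := chain'_getElem hc.2.2 (i := cc.dropLast.length - 1) (by omega)
    simp only [h2] at this
    simp only [h01]
    exact this
  have hg := cyc_infWalk hsne hsch hedge x
  obtain ⟨i, hi, hix⟩ := List.mem_iff_getElem.mp hmem
  refine ⟨fun j => cc.dropLast.getD ((i + j) % cc.dropLast.length) x,
    infWalk_shift hg i, ?_⟩
  simp only [Nat.add_zero]
  rcases Nat.lt_or_ge i cc.dropLast.length with h2 | h2
  · rw [Nat.mod_eq_of_lt h2, List.getD_eq_getElem _ _ h2, List.getElem_dropLast]
    exact hix
  · have hi' : i = cc.length - 1 := by omega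
    have : i % cc.dropLast.length = 0 := by
      rw [hi']
      have : cc.length - 1 = cc.dropLast.length := hslen.symm
      rw [this, Nat.mod_self]
    rw [this, List.getD_eq_getElem _ _ (by omega), List.getElem_dropLast]
    rw [h01]
    simp only [show cc.length - 1 = i from hi'.symm]
    exact hix

lemma reflTransGen_inf {a b : V × V} (h : Relation.ReflTransGen (ProdE E E L L) a b)
    (hb : ∃ f : ℕ → V × V, IsInfWalk (ProdE E E L L) f ∧ f 0 = b) :
    ∃ f : ℕ → V × V, IsInfWalk (ProdE E E L L) f ∧ f 0 = a := by
  induction h using Relation.ReflTransGen.head_induction_on with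
  | refl => exact hb
  | @head a' c' h' _ ih =>
    obtain ⟨g, hg, hg0⟩ := ih
    refine ⟨fun n => Nat.casesOn n a' g, ?_, rfl⟩
    intro i
    cases i with
    | zero => simpa [hg0] using h'
    | succ n => exact hg n

end product
section main
variable {V σ : Type*} {E : V → V → Prop} {L : V → σ}

lemma two_to_prod {p p' : ℕ → V} (hp : IsInfWalk E p) (hp' : IsInfWalk E p')
    (hlab : ∀ i, L (p i) = L (p' i)) :
    IsInfWalk (ProdE E E L L) (fun n => (p n, p' n)) :=
  fun n => ⟨hlab n, hlab (n + 1), hp n, hp' n⟩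

lemma forward_aux_s11 {F : ℕ → V × V} (hFW : IsInfWalk (ProdE E E L L) F)
    (i₀ : ℕ) (hne : (F i₀).1 ≠ (F i₀).2) (hqV : ProdV L L (F i₀))
    {a b : ℕ} (hab : a < b) (he : F (i₀ + a) = F (i₀ + b)) :
    ∃ q q' : V × V, ProdV L L q ∧ q.1 ≠ q.2 ∧ OnCycleP E L q' ∧
      Relation.ReflTransGen (ProdE E E L L) q q' := by
  refine ⟨F i₀, F (i₀ + a), hqV, hne, ?_, infWalk_reflTransGen hFW i₀ a⟩
  refine ⟨(List.range (b - a + 1)).map (fun t => F (i₀ + a + t)), ⟨?_, ?_, ?_⟩, ?_, ?_, ?_⟩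
  · simp
  · intro x hx
    rw [List.mem_map] at hx
    obtain ⟨t, -, rfl⟩ := hx
    exact (hFW _).1
  · refine List.isChain_iff_getElem.mpr ?_
    intro i h
    simp only [List.get_eq_getElem, List.getElem_map, List.getElem_range]
    exact hFW _
  · simp; omega
  · have hne' : (List.range (b - a + 1)).map (fun t => F (i₀ + a + t)) ≠ [] := by simp
    rw [List.head?_eq_head hne', List.getLast?_eq_getLast hne',
      List.head_eq_getElem, List.getLast_eq_getElem]
    simp only [List.getElem_map, List.getElem_range, List.length_map, List.length_range]
    have h1 : i₀ + a + 0 = i₀ + a := by omega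
    have h2 : i₀ + a + (b - a + 1 - 1) = i₀ + b := by omega
    rw [h1, h2, he]
  · exact List.mem_map.mpr ⟨0, by simp, by simp⟩

lemma construct {q q' : V × V} {w cc : List (V × V)}
    (hq2 : q.1 ≠ q.2)
    (hw : IsProdWalk E E L L w) (hwh : w.head? = some q) (hwl : w.getLast? = some q')
    (hc : IsProdWalk E E L L cc) (hclen : 2 ≤ cc.length)
    (hch : cc.head? = some q') (hcl : cc.getLast? = some q') :
    ∃ p p' : ℕ → V, IsInfWalk E p ∧ IsInfWalk E p' ∧ (∃ i, p i ≠ p' i) ∧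
      (∀ i, L (p i) =
        UPChar (w.dropLast.map fun x => L x.1) (cc.dropLast.map fun x => L x.1)
          (L q.1) i) ∧
      (∀ i, L (p' i) =
        UPChar (w.dropLast.map fun x => L x.1) (cc.dropLast.map fun x => L x.1)
          (L q.1) i) := by
  have hwne : w ≠ [] := hw.1
  have hcne : cc ≠ [] := hc.1
  have hwlen : 0 < w.length := List.length_pos_iff.mpr hwne
  have hw0 : w.head hwne = q := by
    rw [List.head?_eq_head hwne] at hwh; exact Option.some_injective _ hwh
  have hwlast : w.getLast hwne = q' := by
    rw [List.getLast?_eq_getLast hwne] at hwl; exact Option.some_injective _ hwl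
  have hc0 : cc.head hcne = q' := by
    rw [List.head?_eq_head hcne] at hch; exact Option.some_injective _ hch
  have hclast : cc.getLast hcne = q' := by
    rw [List.getLast?_eq_getLast hcne] at hcl; exact Option.some_injective _ hcl
  have hrlen : w.dropLast.length = w.length - 1 := List.length_dropLast
  have hslen : cc.dropLast.length = cc.length - 1 := List.length_dropLast
  have hsne : cc.dropLast ≠ [] := by rw [← List.length_pos_iff]; omega
  have hrch : w.dropLast.Chain' (ProdE E E L L) := hw.2.2.prefix (List.dropLast_prefix w)
  have hsch : cc.dropLast.Chain' (ProdE E E L L) := hc.2.2.prefix (List.dropLast_prefix cc)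
  have h01 : cc[0]'(by omega) = cc[cc.length - 1]'(by omega) := by
    rw [← List.head_eq_getElem hcne, ← List.getLast_eq_getElem hcne, hc0, hclast]
  have hedge : ProdE E E L L (cc.dropLast.getLast hsne) (cc.dropLast.head hsne) := by
    rw [List.getLast_eq_getElem, List.head_eq_getElem, List.getElem_dropLast,
      List.getElem_dropLast]
    have := chain'_getElem hc.2.2 (i := cc.dropLast.length - 1) (by omega)
    simp only [show cc.dropLast.length - 1 + 1 = cc.length - 1 by omega] at this
    simp only [h01]
    exact this
  have hg := cyc_infWalk hsne hsch hedge q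
  have hg0 : cc.dropLast.getD (0 % cc.dropLast.length) q = q' := by
    rw [Nat.zero_mod, List.getD_eq_getElem _ _ (by omega), List.getElem_dropLast,
      ← List.head_eq_getElem hcne, hc0]
  have hjoin : ∀ h : w.dropLast ≠ [],
      ProdE E E L L (w.dropLast.getLast h) (cc.dropLast.getD (0 % cc.dropLast.length) q) := by
    intro h
    have hw2 : 2 ≤ w.length := by
      have := List.length_pos_iff.mpr h; omega
    rw [hg0, List.getLast_eq_getElem, List.getElem_dropLast]
    have := chain'_getElem hw.2.2 (i := w.dropLast.length - 1) (by omega)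
    simp only [show w.dropLast.length - 1 + 1 = w.length - 1 by omega] at this
    have hlast : w[w.length - 1]'(by omega) = q' := by
      rw [← List.getLast_eq_getElem hwne, hwlast]
    simp only [hlast] at this
    exact this
  have hf : IsInfWalk (ProdE E E L L)
      (fun i => if i < w.dropLast.length then w.dropLast.getD i q
        else cc.dropLast.getD ((i - w.dropLast.length) % cc.dropLast.length) q) :=
    pref_infWalk hg hrch hjoin q
  set f : ℕ → V × V := fun i => if i < w.dropLast.length then w.dropLast.getD i q
      else cc.dropLast.getD ((i - w.dropLast.length) % cc.dropLast.length) q with hfdef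
  have hf0 : f 0 = q := by
    rcases Nat.lt_or_ge 0 w.dropLast.length with h | h
    · rw [hfdef]
      simp only [if_pos h]
      rw [List.getD_eq_getElem _ _ h, List.getElem_dropLast, ← List.head_eq_getElem hwne, hw0]
    · have hw1 : w.length = 1 := by omega
      have hqq : q = q' := by
        rw [← hw0, ← hwlast, List.head_eq_getElem, List.getLast_eq_getElem]
        simp [hw1]
      rw [hfdef]
      simp only [if_neg (by omega : ¬ (0:ℕ) < w.dropLast.length)]
      rw [Nat.zero_sub] at *
      simpa [hqq] using hg0
  have hPV : ∀ i, ProdV L L (f i) := by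
    intro i
    rw [hfdef]
    rcases Nat.lt_or_ge i w.dropLast.length with h | h
    · simp only [if_pos h]
      rw [List.getD_eq_getElem _ _ h]
      exact hw.2.1 _ ((List.dropLast_prefix w).subset (List.getElem_mem h))
    · have hm : (i - w.dropLast.length) % cc.dropLast.length < cc.dropLast.length :=
        Nat.mod_lt _ (by omega)
      simp only [if_neg (by omega : ¬ i < w.dropLast.length)]
      rw [List.getD_eq_getElem _ _ hm]
      exact hc.2.1 _ ((List.dropLast_prefix cc).subset (List.getElem_mem hm))
  have hlab : ∀ i, L (f i).1 =
      UPChar (w.dropLast.map fun x => L x.1) (cc.dropLast.map fun x => L x.1) (L q.1) i := by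
    intro i
    rw [hfdef]
    simp only [UPChar, List.length_map]
    rcases Nat.lt_or_ge i w.dropLast.length with h | h
    · simp only [if_pos h]
      rw [List.getD_eq_getElem _ _ h,
        List.getD_eq_getElem _ (L q.1) (by simpa using h), List.getElem_map]
    · have hm : (i - w.dropLast.length) % cc.dropLast.length < cc.dropLast.length :=
        Nat.mod_lt _ (by omega)
      simp only [if_neg (by omega : ¬ i < w.dropLast.length)]
      rw [List.getD_eq_getElem _ _ hm,
        List.getD_eq_getElem _ (L q.1) (by simpa using hm), List.getElem_map]
  refine ⟨fun i => (f i).1, fun i => (f i).2, fun i => (hf i).2.2.1,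
    fun i => (hf i).2.2.2, ⟨0, by show (f 0).1 ≠ (f 0).2; rw [hf0]; exact hq2⟩, hlab,
    fun i => ((hPV i).symm).trans (hlab i)⟩

end main

/-- a finite labeled graph `G` has an infinite repeated string
iff some vertex `q ∈ V'_diff` of `G ⊗ G` reaches (possibly by an empty path)
some vertex `q' ∈ V'_cyc`; moreover, in that case, if `R` is the spelling of
a walk from `q` to `q'` with the last character removed, and `S` is the
spelling of a closed walk of positive length starting and ending at `q'`
with the last character removed, then `R S^ω` is an infinite repeated string
of `G`. -/
theorem stmt11 {V σ : Type*} [Fintype V] (E : V → V → Prop) (L : V → σ) :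
    ((∃ p p' : ℕ → V, IsInfWalk E p ∧ IsInfWalk E p' ∧ (∃ i, p i ≠ p' i) ∧
        ∀ i, L (p i) = L (p' i)) ↔
      (∃ q q' : V × V, ProdV L L q ∧ q.1 ≠ q.2 ∧ OnCycleP E L q' ∧
        Relation.ReflTransGen (ProdE E E L L) q q')) ∧
    (∀ (q q' : V × V) (w c : List (V × V)),
      ProdV L L q → q.1 ≠ q.2 →
      IsProdWalk E E L L w → w.head? = some q → w.getLast? = some q' →
      IsProdWalk E E L L c → 2 ≤ c.length →
      c.head? = some q' → c.getLast? = some q' →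
      ∃ p p' : ℕ → V, IsInfWalk E p ∧ IsInfWalk E p' ∧ (∃ i, p i ≠ p' i) ∧
        (∀ i, L (p i) =
          UPChar (w.dropLast.map fun x => L x.1) (c.dropLast.map fun x => L x.1)
            (L q.1) i) ∧
        (∀ i, L (p' i) =
          UPChar (w.dropLast.map fun x => L x.1) (c.dropLast.map fun x => L x.1)
            (L q.1) i)) := by
  constructor
  · constructor
    · rintro ⟨p, p', hp, hp', ⟨i₀, hne⟩, hlab⟩
      have hFW := two_to_prod hp hp' hlab
      obtain ⟨a, b, hab, he⟩ :=
        Finite.exists_ne_map_eq_of_infinite (fun n : ℕ => (p (i₀ + n), p' (i₀ + n)))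
      rcases lt_or_gt_of_ne hab with h | h
      · exact forward_aux_s11 hFW i₀ hne (hlab i₀) h he
      · exact forward_aux_s11 hFW i₀ hne (hlab i₀) h he.symm
    · rintro ⟨q, q', hqV, hq2, hcyc, hreach⟩
      obtain ⟨f, hf, hf0⟩ := reflTransGen_inf hreach (cycle_inf hcyc)
      exact prod_to_two hf (by rw [hf0]; exact hq2)
  · intro q q' w cc hqV hq2 hw hwh hwl hc hclen hch hcl
    exact construct hq2 hw hwh hwl hc hclen hch hcl
end

section
/- Let G = (V,E,L) be a finite Σ-labeled graph with no infinite repeated string. Then G has repeated strings of unbounded length (i.e., for every n ∈ ℕ there is a repeated string S of G with |S| > n) if and only if there exist nonempty strings R, S ∈ Σ⁺ such that R^m S is a repeated string of G for every m ≥ 1. -/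
/-- A string `S ∈ Σ⁺` is repeated in `(V,E,L)` if two distinct walks spell it. -/
def Repeated {V σ : Type*} (E : V → V → Prop) (L : V → σ) (S : List σ) : Prop :=
  ∃ p p' : List V, IsWalk E p ∧ IsWalk E p' ∧ p.map L = S ∧ p'.map L = S ∧ p ≠ p'

/-- The concatenation `R^m` of `m` copies of the string `R`. -/
def StrPow {σ : Type*} (R : List σ) (m : ℕ) : List σ :=
  (List.replicate m R).flatten


private lemma chain'_getElem_s12 {V : Type*} {E : V → V → Prop} {p : List V}
    (h : p.Chain' E) {i : ℕ} (hi : i + 1 < p.length) :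
    E (p[i]'(by omega)) (p[i+1]'hi) := by
  have := List.isChain_iff_getElem.mp h i (by omega)
  simpa [List.get_eq_getElem] using this

private def cyc (a b k : ℕ) : ℕ := if k < a then k else a + (k - a) % (b - a)

private lemma cyc_lt {a b len : ℕ} (hab : a < b) (hb : b < len) (k : ℕ) :
    cyc a b k < len := by
  unfold cyc; split
  · omega
  · have := Nat.mod_lt (k - a) (show 0 < b - a by omega); omega

private lemma cyc_le {a b k : ℕ} (hab : a < b) (hk : k ≤ a) : cyc a b k = k := by
  unfold cyc; split
  · rfl
  · have hk' : k = a := by omega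
    simp [hk']

private lemma cyc_step {V : Type*} {E : V → V → Prop} {p : List V}
    (hc : p.Chain' E) {a b : ℕ} (hab : a < b) (hb : b < p.length)
    (hcyc : p[a]'(by omega) = p[b]'hb) (k : ℕ) :
    E (p[cyc a b k]'(cyc_lt hab hb k)) (p[cyc a b (k+1)]'(cyc_lt hab hb (k+1))) := by
  rcases Nat.lt_or_ge k a with hk | hk
  · have e1 : cyc a b k = k := cyc_le hab (by omega)
    have e2 : cyc a b (k+1) = k+1 := cyc_le hab (by omega)
    rcases Nat.lt_or_ge (k+1) a with h | h
    · simp only [e1, e2]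
      exact chain'_getElem_s12 hc (by omega)
    · -- k + 1 = a
      simp only [e1, e2]
      exact chain'_getElem_s12 hc (by omega)
  · have e1 : cyc a b k = a + (k - a) % (b - a) := by
      unfold cyc; rw [if_neg (by omega)]
    have e2 : k + 1 - a = (k - a) + 1 := by omega
    have hrlt : (k - a) % (b - a) < b - a := Nat.mod_lt _ (by omega)
    have hdm := Nat.div_add_mod (k - a) (b - a)
    rcases Nat.lt_or_ge ((k - a) % (b - a) + 1) (b - a) with hr | hr
    · have e3 : cyc a b (k+1) = a + (k - a) % (b - a) + 1 := by
        unfold cyc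
        rw [if_neg (by omega), e2]
        have h4 : k - a + 1 = (b - a) * ((k - a)/(b - a)) + ((k - a) % (b - a) + 1) := by
          omega
        rw [h4, Nat.mul_add_mod, Nat.mod_eq_of_lt hr]
        omega
      simp only [e1, e3]
      exact chain'_getElem_s12 hc (by omega)
    · have hreq : (k - a) % (b - a) = b - a - 1 := by omega
      have e3 : cyc a b (k+1) = a := by
        unfold cyc
        rw [if_neg (by omega), e2]
        have h4 : k - a + 1 = (b - a) * ((k - a)/(b - a)) + (b - a) := by omega
        rw [h4, Nat.mul_add_mod, Nat.mod_self]
        omega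
      simp only [e1, e3, hreq, show a + (b - a - 1) = b - 1 from by omega]
      rw [show (p[a]'(by omega) : V) = p[b]'hb from hcyc]
      have h5 := chain'_getElem_s12 hc (i := b - 1) (by omega)
      simpa [show b - 1 + 1 = b from by omega] using h5

private lemma pump_walk {V : Type*} {E : V → V → Prop} {p : List V}
    (hc : p.Chain' E) {i j : ℕ} (hij : i < j) (hj : j < p.length)
    (hcyc : p[i]'(by omega) = p[j]'hj) (m : ℕ) :
    ((List.replicate m ((p.drop i).take (j - i))).flatten ++ p.drop j).Chain' E ∧
    ((List.replicate m ((p.drop i).take (j - i))).flatten ++ p.drop j).head? =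
      some (p[j]'hj) := by
  set seg := (p.drop i).take (j - i) with hseg
  have hseglen : seg.length = j - i := by
    simp [hseg]; omega
  have hsegget : ∀ (k : ℕ) (hk : k < j - i), seg[k]'(by omega) = p[i + k]'(by omega) := by
    intro k hk
    simp [hseg, List.getElem_take, List.getElem_drop]
  induction m with
  | zero =>
    refine ⟨by simpa [List.Chain'] using hc.drop j, ?_⟩
    simp only [List.replicate_zero, List.flatten_nil, List.nil_append,
      List.head?_eq_getElem?, List.getElem?_drop]
    rw [List.getElem?_eq_getElem (by omega)]
    simp
  | succ m ih =>
    obtain ⟨ih1, ih2⟩ := ih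
    have hrep : (List.replicate (m+1) seg).flatten ++ p.drop j =
        seg ++ ((List.replicate m seg).flatten ++ p.drop j) := by
      simp [List.replicate_succ, List.append_assoc]
    rw [hrep]
    have hlast : seg.getLast? = some (p[j-1]'(by omega)) := by
      rw [List.getLast?_eq_getElem?, List.getElem?_eq_getElem (by omega)]
      have := hsegget (seg.length - 1) (by omega)
      rw [this]
      simp only [show i + (seg.length - 1) = j - 1 from by omega]
    have hhead : seg.head? = some (p[i]'(by omega)) := by
      rw [List.head?_eq_getElem?, List.getElem?_eq_getElem (by omega)]
      have := hsegget 0 (by omega)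
      simpa using this
    constructor
    · unfold List.Chain'; rw [List.isChain_append]
      refine ⟨(hc.drop i).take _, ih1, ?_⟩
      intro x hx y hy
      rw [hlast] at hx
      rw [ih2] at hy
      simp only [Option.mem_def, Option.some.injEq] at hx hy
      subst hx; subst hy
      have h5 := chain'_getElem_s12 hc (i := j - 1) (by omega)
      simpa [show j - 1 + 1 = j from by omega] using h5
    · rw [List.head?_append, hhead]
      simp [hcyc]

/-- if a finite labeled graph `G` has no infinite repeated
string, then `G` has repeated strings of unbounded length iff there exist
nonempty strings `R, S` such that `R^m S` is repeated in `G` for every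
`m ≥ 1`. -/
theorem stmt12 {V σ : Type*} [Fintype V] (E : V → V → Prop) (L : V → σ)
    (hfin : ¬ ∃ p p' : ℕ → V, IsInfWalk E p ∧ IsInfWalk E p' ∧
      (∃ i, p i ≠ p' i) ∧ ∀ i, L (p i) = L (p' i)) :
    (∀ n : ℕ, ∃ S : List σ, Repeated E L S ∧ n < S.length) ↔
    (∃ R S : List σ, R ≠ [] ∧ S ≠ [] ∧
      ∀ m : ℕ, 1 ≤ m → Repeated E L (StrPow R m ++ S)) := by
  constructor
  · intro h
    obtain ⟨Str, ⟨p, p', ⟨hpne, hpc⟩, ⟨hpne', hpc'⟩, hmap, hmap', hppne⟩, hlen⟩ :=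
      h (2 * (Fintype.card V * Fintype.card V) + 2)
    set n0 := Fintype.card V * Fintype.card V with hn0
    have hlenp : p.length = Str.length := by rw [← hmap]; simp
    have hlenp' : p'.length = Str.length := by rw [← hmap']; simp
    have hlenEq : p'.length = p.length := by omega
    have hbig : 2 * n0 + 2 < p.length := by omega
    have hlab : ∀ k (hk : k < p.length), L (p[k]'hk) = L (p'[k]'(by omega)) := by
      intro k hk
      have h1 : (p.map L)[k]? = (p'.map L)[k]? := by rw [hmap, hmap']
      rw [List.getElem?_eq_getElem (by simpa using hk),
        List.getElem?_eq_getElem (by simp; omega)] at h1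
      simpa using h1
    have ht : ∃ t, ∃ (h : t < p.length), p[t]'h ≠ p'[t]'(by omega) := by
      by_contra hcon
      push_neg at hcon
      refine hppne (List.ext_getElem (by omega) fun n h1 h2 => ?_)
      exact hcon n h1
    obtain ⟨t, htlen, htne⟩ := ht
    have hnorep : ∀ a b, t ≤ a → ∀ (hab : a < b) (hb : b < p.length),
        ¬ (p[a]'(by omega) = p[b]'hb ∧ p'[a]'(by omega) = p'[b]'(by omega)) := by
      rintro a b ha hab hb ⟨h1, h2⟩
      refine hfin ⟨fun k => p[cyc a b k]'(cyc_lt hab hb k),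
        fun k => p'[cyc a b k]'(cyc_lt hab (show b < p'.length by omega) k), ?_, ?_, ?_, ?_⟩
      · intro k; exact cyc_step hpc hab hb h1 k
      · intro k; exact cyc_step hpc' hab (show b < p'.length by omega) h2 k
      · refine ⟨t, ?_⟩
        simp only [cyc_le hab ha]
        exact htne
      · intro k; exact hlab _ (cyc_lt hab hb k)
    have hsuf : p.length - t ≤ n0 := by
      have hinj : Function.Injective (fun k : Fin (p.length - t) =>
          ((p[t + k.1]'(by omega), p'[t + k.1]'(by omega)) : V × V)) := by
        intro k k' hkk
        simp only [Prod.mk.injEq] at hkk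
        by_contra hne
        have hne' : k.1 ≠ k'.1 := fun hh => hne (Fin.ext hh)
        rcases Nat.lt_or_ge k.1 k'.1 with hlt | hge
        · exact hnorep (t + k.1) (t + k'.1) (by omega) (by omega) (by omega)
            ⟨hkk.1, hkk.2⟩
        · exact hnorep (t + k'.1) (t + k.1) (by omega) (by omega) (by omega)
            ⟨hkk.1.symm, hkk.2.symm⟩
      have h2 := Fintype.card_le_of_injective _ hinj
      simpa [Fintype.card_prod, hn0] using h2
    have htbig : n0 + 2 < t := by omega
    obtain ⟨k1, k2, hk12, hpair⟩ := Fintype.exists_ne_map_eq_of_card_lt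
      (fun k : Fin (n0 + 1) => ((p[k.1]'(by omega), p'[k.1]'(by omega)) : V × V))
      (by simp only [Fintype.card_prod, Fintype.card_fin]; omega)
    simp only [Prod.mk.injEq] at hpair
    have hb1 := k1.isLt
    have hb2 := k2.isLt
    have hex : ∃ i j, i < j ∧ j ≤ n0 ∧ ∃ (hj : j < p.length) (hi : i < p.length),
        p[i]'hi = p[j]'hj ∧ p'[i]'(by omega) = p'[j]'(by omega) := by
      rcases Nat.lt_or_ge k1.1 k2.1 with hlt | hge
      · exact ⟨k1.1, k2.1, hlt, by omega, by omega, by omega, hpair.1, hpair.2⟩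
      · have hlt' : k2.1 < k1.1 := by
          rcases Nat.lt_or_ge k2.1 k1.1 with h'|h'
          · exact h'
          · exact absurd (Fin.ext (by omega)) hk12
        exact ⟨k2.1, k1.1, hlt', by omega, by omega, by omega, hpair.1.symm, hpair.2.symm⟩
    obtain ⟨i, j, hij, hjn0, hjlen, hilen, hpij, hpij'⟩ := hex
    refine ⟨(Str.drop i).take (j - i), Str.drop j, ?_, ?_, ?_⟩
    · apply List.ne_nil_of_length_pos
      simp only [List.length_take, List.length_drop]
      omega
    · apply List.ne_nil_of_length_pos
      simp only [List.length_drop]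
      omega
    · intro m hm
      obtain ⟨hW1, _⟩ := pump_walk hpc hij hjlen hpij m
      obtain ⟨hW1', _⟩ := pump_walk hpc' hij (show j < p'.length by omega) hpij' m
      have hsl : ((p.drop i).take (j - i)).length = j - i := by
        simp only [List.length_take, List.length_drop]
        omega
      have hsl' : ((p'.drop i).take (j - i)).length = j - i := by
        simp only [List.length_take, List.length_drop]
        omega
      have hl1 : ((List.replicate m ((p.drop i).take (j - i))).flatten).length
          = m * (j - i) := by
        rw [List.length_flatten, List.map_replicate, hsl, List.sum_replicate, smul_eq_mul]
      have hl1' : ((List.replicate m ((p'.drop i).take (j - i))).flatten).length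
          = m * (j - i) := by
        rw [List.length_flatten, List.map_replicate, hsl', List.sum_replicate, smul_eq_mul]
      refine ⟨(List.replicate m ((p.drop i).take (j - i))).flatten ++ p.drop j,
              (List.replicate m ((p'.drop i).take (j - i))).flatten ++ p'.drop j,
              ⟨?_, hW1⟩, ⟨?_, hW1'⟩, ?_, ?_, ?_⟩
      · simp only [ne_eq, List.append_eq_nil_iff, not_and]
        intro _
        apply List.ne_nil_of_length_pos
        simp only [List.length_drop]; omega
      · simp only [ne_eq, List.append_eq_nil_iff, not_and]
        intro _
        apply List.ne_nil_of_length_pos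
        simp only [List.length_drop]; omega
      · rw [List.map_append, List.map_flatten, List.map_replicate, List.map_take,
          List.map_drop, List.map_drop, hmap]
        rfl
      · rw [List.map_append, List.map_flatten, List.map_replicate, List.map_take,
          List.map_drop, List.map_drop, hmap']
        rfl
      · intro hW
        have hdropeq : p.drop j = p'.drop j := by
          have h6 := congrArg (List.drop (m * (j - i))) hW
          rwa [List.drop_left' hl1, List.drop_left' hl1'] at h6
        apply htne
        have h7 := congrArg (fun l : List V => l[t - j]?) hdropeq
        simp only [List.getElem?_drop] at h7
        rw [show j + (t - j) = t from by omega] at h7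
        rw [List.getElem?_eq_getElem htlen, List.getElem?_eq_getElem (by omega)] at h7
        simpa using h7
  · rintro ⟨R, S, hR, hS, hrep⟩ n
    refine ⟨StrPow R (n + 1) ++ S, hrep (n + 1) (by omega), ?_⟩
    have hR1 : 1 ≤ R.length := List.length_pos_iff.mpr hR
    have hpow : (StrPow R (n + 1)).length = (n + 1) * R.length := by
      unfold StrPow
      rw [List.length_flatten, List.map_replicate, List.sum_replicate, smul_eq_mul]
    rw [List.length_append, hpow]
    have h9 : (n + 1) * 1 ≤ (n + 1) * R.length := Nat.mul_le_mul_left _ hR1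
    omega
end

section
/- Let G = (V,E,L) be a finite Σ-labeled graph with no infinite repeated string, and let G ⊗ G = (V',E',L') be its labeled direct self-product. Then G has repeated strings of unbounded length if and only if some vertex (u,u) ∈ V'_cyc reaches (possibly by an empty path) some vertex (v,v) ∈ V'_ndet. -/
/-- `v` is a non-deterministic vertex of `G`: it has two distinct
out-neighbors with the same label. -/
def Ndet {V σ : Type*} (E : V → V → Prop) (L : V → σ) (v : V) : Prop :=
  ∃ w w' : V, w ≠ w' ∧ E v w ∧ E v w' ∧ L w = L w'

lemma mod_succ_aux (x k : ℕ) : (x + 1) % k = (x % k + 1) % k := by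
  conv_lhs => rw [← Nat.mod_add_div x k]
  rw [Nat.add_right_comm, Nat.add_mul_mod_self_left]

lemma mod_step (x k : ℕ) (hk : 0 < k) :
    (x + 1) % k = x % k + 1 ∨ (x % k = k - 1 ∧ (x + 1) % k = 0) := by
  have h1 := mod_succ_aux x k
  have hr : x % k < k := Nat.mod_lt _ hk
  rcases Nat.lt_or_ge (x % k + 1) k with h | h
  · left; rw [h1, Nat.mod_eq_of_lt h]
  · right
    have h2 : x % k + 1 = k := by omega
    exact ⟨by omega, by rw [h1, h2, Nat.mod_self]⟩

def pumpIdx (i j m : ℕ) : ℕ := if m < j then m else i + (m - i) % (j - i)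

lemma pumpIdx_lt {i j n : ℕ} (hij : i < j) (hjn : j < n) (m : ℕ) : pumpIdx i j m < n := by
  unfold pumpIdx; split_ifs with h
  · omega
  · have : (m - i) % (j - i) < j - i := Nat.mod_lt _ (by omega)
    omega

lemma pumpIdx_eq {i j : ℕ} (m : ℕ) (h : m < j) : pumpIdx i j m = m := if_pos h

lemma pumpIdx_step {i j : ℕ} (hij : i < j) (m : ℕ) :
    pumpIdx i j (m + 1) = pumpIdx i j m + 1 ∨
      (pumpIdx i j m = j - 1 ∧ pumpIdx i j (m + 1) = i) := by
  rcases Nat.lt_trichotomy (m + 1) j with h | h | h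
  · left; rw [pumpIdx_eq (m + 1) h, pumpIdx_eq m (by omega)]
  · right
    have e1 : pumpIdx i j m = m := pumpIdx_eq m (by omega)
    have e2 : pumpIdx i j (m + 1) = i := by
      unfold pumpIdx
      rw [if_neg (by omega), show m + 1 - i = j - i by omega, Nat.mod_self]
      omega
    exact ⟨by rw [e1]; omega, e2⟩
  · have e1 : pumpIdx i j m = i + (m - i) % (j - i) := by
      unfold pumpIdx; rw [if_neg (by omega)]
    have e2 : pumpIdx i j (m + 1) = i + ((m - i) + 1) % (j - i) := by
      unfold pumpIdx; rw [if_neg (by omega), show m + 1 - i = (m - i) + 1 by omega]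
    rcases mod_step (m - i) (j - i) (by omega) with h2 | ⟨h2, h3⟩
    · left; rw [e1, e2, h2]; omega
    · right; rw [e1, e2, h2, h3]; constructor <;> omega

lemma pump {V : Type*} (E : V → V → Prop) (a : ℕ → V) {n i j : ℕ}
    (hij : i < j) (hjn : j < n)
    (hstep : ∀ m, m + 1 < n → E (a m) (a (m + 1)))
    (haij : a i = a j) :
    IsInfWalk E (fun m => a (pumpIdx i j m)) := by
  intro m
  simp only
  rcases pumpIdx_step hij m with h | ⟨h1, h2⟩
  · rw [h]
    exact hstep _ (by have := pumpIdx_lt hij hjn (m + 1); omega)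
  · have hj : E (a (j - 1)) (a (j - 1 + 1)) := hstep _ (by omega)
    rw [show j - 1 + 1 = j from by omega] at hj
    rw [h1, h2, haij]
    exact hj

lemma chain_prodV {V σ : Type*} {E : V → V → Prop} {L : V → σ} :
    ∀ (l : List (V × V)) (x : V × V), List.Chain (ProdE E E L L) x l →
      ∀ y ∈ l, ProdV L L y := by
  intro l
  induction l with
  | nil => simp
  | cons b t ih =>
    intro x hch y hy
    rcases List.chain_cons.mp hch with ⟨hxb, hbt⟩
    rcases List.mem_cons.mp hy with rfl | hy
    · exact hxb.2.1
    · exact ih b hbt y hy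

lemma rtg_range {α : Type*} (R : α → α → Prop) (q : ℕ → α) (s : ℕ) :
    ∀ t, s ≤ t → (∀ m, s ≤ m → m < t → R (q m) (q (m + 1))) →
      Relation.ReflTransGen R (q s) (q t) := by
  intro t
  induction t with
  | zero =>
    intro h _
    have : s = 0 := Nat.le_zero.mp h
    rw [this]
  | succ t ih =>
    intro hst hstep
    rcases Nat.lt_or_ge s (t + 1) with h | h
    · have hs_t : s ≤ t := by omega
      exact (ih hs_t (fun m hm hm2 => hstep m hm (by omega))).tail (hstep t hs_t (by omega))
    · rw [show s = t + 1 by omega]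
/-- if a finite labeled graph `G` has no infinite repeated
string, then `G` has repeated strings of unbounded length iff some vertex
`(u,u) ∈ V'_cyc` of `G ⊗ G` reaches (possibly by an empty path) some vertex
`(v,v) ∈ V'_ndet`. -/
theorem stmt13 {V σ : Type*} [Fintype V] (E : V → V → Prop) (L : V → σ)
    (hfin : ¬ ∃ p p' : ℕ → V, IsInfWalk E p ∧ IsInfWalk E p' ∧
      (∃ i, p i ≠ p' i) ∧ ∀ i, L (p i) = L (p' i)) :
    (∀ n : ℕ, ∃ S : List σ, Repeated E L S ∧ n < S.length) ↔
    (∃ u v : V, OnCycleP E L (u, u) ∧ Ndet E L v ∧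
      Relation.ReflTransGen (ProdE E E L L) (u, u) (v, v)) := by
  classical
  constructor
  · -- forward direction
    intro h
    set C1 := Fintype.card V with hC1
    obtain ⟨S, ⟨p, p', ⟨hpne, hpch⟩, ⟨hp'ne, hp'ch⟩, hpS, hp'S, hppne⟩, hlen⟩ :=
      h (C1 * C1 + C1 + 1)
    haveI : Inhabited V := ⟨p.getLast hpne⟩
    set n := p.length with hn
    have hlenS : S.length = n := by rw [← hpS, List.length_map]
    have hn' : p'.length = n := by
      have := congrArg List.length hp'S
      rw [List.length_map] at this
      omega
    set a : ℕ → V := fun m => p.getD m default with ha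
    set b : ℕ → V := fun m => p'.getD m default with hb
    have haeq : ∀ (m : ℕ) (hm : m < n), a m = p[m] := fun m hm =>
      List.getD_eq_getElem p default hm
    have hbeq : ∀ (m : ℕ) (hm : m < n), b m = p'[m]'(by omega) := fun m hm =>
      List.getD_eq_getElem p' default (by omega)
    have hstepa : ∀ m, m + 1 < n → E (a m) (a (m + 1)) := by
      intro m hm
      have h2 := List.isChain_iff_getElem.mp hpch m (by omega)
      rw [haeq m (by omega), haeq (m + 1) (by omega)]
      simpa [List.get_eq_getElem] using h2
    have hstepb : ∀ m, m + 1 < n → E (b m) (b (m + 1)) := by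
      intro m hm
      have h2 := List.isChain_iff_getElem.mp hp'ch m (by omega)
      rw [hbeq m (by omega), hbeq (m + 1) (by omega)]
      simpa [List.get_eq_getElem] using h2
    have hlab : ∀ m, m < n → L (a m) = L (b m) := by
      intro m hm
      have h1 : p.map L = p'.map L := by rw [hpS, hp'S]
      have h2 : (p.map L)[m]'(by simpa using hm) = (p'.map L)[m]'(by simp [h1] at *; simpa [hn'] using hm) := by
        simp only [h1]
      rw [List.getElem_map, List.getElem_map] at h2
      rw [haeq m hm, hbeq m hm]
      exact h2
    have hdiff : ∃ m, a m ≠ b m := by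
      by_contra hc
      push_neg at hc
      apply hppne
      apply List.ext_get (by omega)
      intro m h1 h2
      have h3 := hc m
      rw [haeq m h1, hbeq m (by omega)] at h3
      simpa [List.get_eq_getElem] using h3
    set d := Nat.find hdiff with hdd
    have hd : a d ≠ b d := Nat.find_spec hdiff
    have hdn : d < n := by
      by_contra hc
      push_neg at hc
      apply hd
      show p.getD d default = p'.getD d default
      rw [List.getD_eq_default _ _ (by omega), List.getD_eq_default _ _ (by omega)]
    have hdiag : ∀ m, m < d → a m = b m := fun m hm => not_not.mp (Nat.find_min hdiff hm)
    have hkey : ∀ i j : ℕ, i < j → j < n → d < j → (a i, b i) ≠ (a j, b j) := by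
      intro i j hij hjn hdj hcontra
      have hai : a i = a j := congrArg Prod.fst hcontra
      have hbi : b i = b j := congrArg Prod.snd hcontra
      apply hfin
      refine ⟨_, _, pump E a hij hjn hstepa hai, pump E b hij hjn hstepb hbi, ⟨d, ?_⟩, ?_⟩
      · simpa [pumpIdx_eq d hdj] using hd
      · intro m
        simpa using hlab _ (pumpIdx_lt hij hjn m)
    have hcount : n - (d + 1) ≤ C1 * C1 := by
      have hinj : Function.Injective
          (fun k : Fin (n - (d + 1)) => (a (d + 1 + k), b (d + 1 + k))) := by
        intro k k' hkk
        by_contra hne2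
        have hvne : (k : ℕ) ≠ k' := fun hc => hne2 (Fin.ext hc)
        rcases Nat.lt_or_gt_of_ne hvne with hlt | hlt
        · exact hkey (d + 1 + k) (d + 1 + k') (by omega) (by omega) (by omega) hkk
        · exact hkey (d + 1 + k') (d + 1 + k) (by omega) (by omega) (by omega) hkk.symm
      calc n - (d + 1) = Fintype.card (Fin (n - (d + 1))) := (Fintype.card_fin _).symm
        _ ≤ Fintype.card (V × V) := Fintype.card_le_of_injective _ hinj
        _ = C1 * C1 := by rw [Fintype.card_prod, hC1]
    have hdC1 : C1 < d := by omega
    obtain ⟨i, j, hij, haij, hjC1⟩ : ∃ i j : ℕ, i < j ∧ a i = a j ∧ j ≤ C1 := by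
      obtain ⟨k1, k2, hk12, hak⟩ := Fintype.exists_ne_map_eq_of_card_lt
        (fun k : Fin (C1 + 1) => a k) (by simp [hC1])
      rcases Nat.lt_or_gt_of_ne (fun hc => hk12 (Fin.ext hc)) with hlt | hlt
      · exact ⟨k1, k2, hlt, hak, by omega⟩
      · exact ⟨k2, k1, hlt, hak.symm, by omega⟩
    have hjd : j < d := by omega
    have hbij : b i = b j := by rw [← hdiag i (by omega), ← hdiag j hjd, haij]
    set q : ℕ → V × V := fun m => (a m, b m) with hq
    have hProdVq : ∀ m, m < n → ProdV L L (q m) := fun m hm => hlab m hm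
    have hProdEq : ∀ m, m + 1 < n → ProdE E E L L (q m) (q (m + 1)) :=
      fun m hm => ⟨hlab m (by omega), hlab (m + 1) hm, hstepa m hm, hstepb m hm⟩
    have hqi : (a i, a i) = q i := by
      rw [hq]; simp only [Prod.mk.injEq, true_and]; exact hdiag i (by omega)
    have hqd : (a (d - 1), a (d - 1)) = q (d - 1) := by
      rw [hq]; simp only [Prod.mk.injEq, true_and]; exact hdiag (d - 1) (by omega)
    refine ⟨a i, a (d - 1), ?_, ?_, ?_⟩
    · refine ⟨(List.range (j - i + 1)).map (fun k => q (i + k)), ⟨?_, ?_, ?_⟩, ?_, ?_, ?_⟩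
      · simp [List.range_succ]
      · intro x hx
        simp only [List.mem_map, List.mem_range] at hx
        obtain ⟨k, hk, rfl⟩ := hx
        exact hProdVq _ (by omega)
      · unfold List.Chain'; rw [List.isChain_map]
        refine (List.isChain_range_succ _ _).mpr (fun m hm => ?_)
        exact hProdEq (i + m) (by omega)
      · simp only [List.length_map, List.length_range]; omega
      · have h1 : ((List.range (j - i + 1)).map (fun k => q (i + k))).head? = some (q (i + 0)) := by
          rw [List.range_succ_eq_map]
          simp
        have h2 : ((List.range (j - i + 1)).map (fun k => q (i + k))).getLast?
            = some (q (i + (j - i))) := by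
          rw [List.range_succ, List.map_append]
          simp [List.getLast?_concat]
        rw [h1, h2]
        congr 1
        rw [show i + 0 = i from rfl, show i + (j - i) = j by omega]
        rw [hq]; simp only [Prod.mk.injEq]; exact ⟨haij, hbij⟩
      · rw [hqi]
        exact List.mem_map.mpr ⟨0, List.mem_range.mpr (by omega), rfl⟩
    · refine ⟨a d, b d, hd, ?_, ?_, hlab d hdn⟩
      · have h2 := hstepa (d - 1) (by omega)
        rwa [show d - 1 + 1 = d from by omega] at h2
      · have h2 := hstepb (d - 1) (by omega)
        rw [show d - 1 + 1 = d from by omega] at h2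
        rwa [hdiag (d - 1) (by omega)]
    · rw [hqi, hqd]
      exact rtg_range _ q i (d - 1) (by omega) (fun m hm1 hm2 => hProdEq m (by omega))
  · -- backward direction
    rintro ⟨u, v, ⟨cl, ⟨hcne, hcV, hcch⟩, hclen, hcHL, huc⟩,
      ⟨w, w', hww', hEvw, hEvw', hLww⟩, hreach⟩ n
    haveI : Inhabited (V × V) := ⟨(u, u)⟩
    set ℓ := cl.length - 1 with hl
    have hl1 : 1 ≤ ℓ := by omega
    set cg : ℕ → V × V := fun m => cl.getD m default with hcg
    have hcg_lt : ∀ (r : ℕ) (hr : r < cl.length), cg r = cl[r] := fun r hr =>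
      List.getD_eq_getElem cl default hr
    have hcgV : ∀ r, r < cl.length → ProdV L L (cg r) := by
      intro r hr
      rw [hcg_lt r hr]
      exact hcV _ (List.getElem_mem hr)
    have hcgE : ∀ r, r + 1 < cl.length → ProdE E E L L (cg r) (cg (r + 1)) := by
      intro r hr
      have h2 := List.isChain_iff_getElem.mp hcch r (by omega)
      rw [hcg_lt r (by omega), hcg_lt (r + 1) hr]
      simpa [List.get_eq_getElem] using h2
    have hcg0 : cg ℓ = cg 0 := by
      have h0 : cl[0]? = cl[ℓ]? := by
        rw [← List.head?_eq_getElem?, hl, ← List.getLast?_eq_getElem?]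
        exact hcHL
      rw [hcg_lt 0 (by omega), hcg_lt ℓ (by omega)]
      rw [List.getElem?_eq_getElem (by omega : 0 < cl.length),
        List.getElem?_eq_getElem (by omega : ℓ < cl.length)] at h0
      exact (Option.some_injective _ h0).symm
    obtain ⟨t, ht, hteq⟩ := List.mem_iff_getElem.mp huc
    have hcgt : cg (t % ℓ) = (u, u) := by
      rcases Nat.lt_or_ge t ℓ with hlt | hge
      · rw [Nat.mod_eq_of_lt hlt, hcg_lt t ht, hteq]
      · have htℓ : t = ℓ := by omega
        have h5 : cl[ℓ]? = some (u, u) := by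
          rw [← htℓ, List.getElem?_eq_getElem ht, hteq]
        rw [htℓ, Nat.mod_self, ← hcg0, hcg_lt ℓ (by omega)]
        rw [List.getElem?_eq_getElem (show ℓ < cl.length by omega)] at h5
        exact Option.some_injective _ h5
    set f : ℕ → V × V := fun m => cg ((t + m) % ℓ) with hf
    have hfV : ∀ m, ProdV L L (f m) :=
      fun m => hcgV _ (by have := Nat.mod_lt (t + m) (show 0 < ℓ by omega); omega)
    have hfE : ∀ m, ProdE E E L L (f m) (f (m + 1)) := by
      intro m
      have hr : (t + m) % ℓ < ℓ := Nat.mod_lt _ (by omega)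
      have hstep := hcgE ((t + m) % ℓ) (by omega)
      simp only [hf, show t + (m + 1) = (t + m) + 1 from rfl]
      rcases mod_step (t + m) ℓ (by omega) with h2 | ⟨h2, h3⟩
      · rw [h2]; exact hstep
      · have h4 := hcgE (ℓ - 1) (by omega)
        rw [show ℓ - 1 + 1 = ℓ from by omega] at h4
        rw [h2, h3, ← hcg0]
        exact h4
    have hfK : ∀ k, f (ℓ * k) = (u, u) := by
      intro k
      simp only [hf]
      rw [Nat.add_mul_mod_self_left]
      exact hcgt
    have hedge : ProdE E E L L (v, v) (w, w') := ⟨rfl, hLww, hEvw, hEvw'⟩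
    have hpath : Relation.ReflTransGen (ProdE E E L L) (u, u) (w, w') := hreach.tail hedge
    obtain ⟨l₂, hl₂ch, hl₂last⟩ := List.exists_isChain_cons_of_relationReflTransGen hpath
    obtain ⟨y₀, t₂, rfl⟩ : ∃ y₀ t₂, l₂ = y₀ :: t₂ := by
      cases l₂ with
      | nil =>
        exfalso
        apply hww'
        have h1 : (u, u) = (w, w') := by simpa using hl₂last
        have h2 := congrArg Prod.fst h1
        have h3 := congrArg Prod.snd h1
        simp at h2 h3
        rw [← h2, ← h3]
      | cons y₀ t₂ => exact ⟨y₀, t₂, rfl⟩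
    have hl₂V : ∀ y ∈ y₀ :: t₂, ProdV L L y := chain_prodV _ (u, u) hl₂ch
    set K := ℓ * (n + 1) with hK
    set front := (List.range (K + 1)).map f with hfront
    have hfrontch : front.Chain' (ProdE E E L L) := by
      rw [hfront]; unfold List.Chain'; rw [List.isChain_map]
      exact (List.isChain_range_succ _ _).mpr (fun m _ => hfE m)
    have hfrontlast : front.getLast? = some (u, u) := by
      rw [hfront, List.range_succ, List.map_append]
      simp only [List.map_cons, List.map_nil, List.getLast?_concat]
      rw [hK, hfK (n + 1)]
    set Q := front ++ y₀ :: t₂ with hQ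
    have hQne : Q ≠ [] := by simp [hQ]
    have hQch : Q.Chain' (ProdE E E L L) := by
      rw [hQ]; unfold List.Chain'; rw [List.isChain_append]
      refine ⟨hfrontch, ?_, ?_⟩
      · exact (show List.IsChain (ProdE E E L L) ((u, u) :: y₀ :: t₂) from hl₂ch).tail
      · intro x hx y hy
        rw [hfrontlast] at hx
        simp only [Option.mem_some_iff] at hx
        simp only [List.head?_cons, Option.mem_some_iff] at hy
        subst hx; subst hy
        exact (List.chain_cons.mp hl₂ch).1
    have hQlast : Q.getLast? = some (w, w') := by
      rw [hQ, List.getLast?_append]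
      have h1 : (y₀ :: t₂).getLast? = some (w, w') := by
        rw [List.getLast?_eq_getLast (List.cons_ne_nil _ _), ← hl₂last,
          List.getLast_cons (List.cons_ne_nil _ _)]
      rw [h1]
      rfl
    have hQV : ∀ x ∈ Q, ProdV L L x := by
      intro x hx
      rcases List.mem_append.mp hx with h2 | h2
      · obtain ⟨m, hm, rfl⟩ := List.mem_map.mp h2
        exact hfV m
      · exact hl₂V x h2
    have hQlen : n < Q.length := by
      have h5 : Q.length = K + 1 + (y₀ :: t₂).length := by
        simp [hQ, hfront]
      have h6 : n + 1 ≤ ℓ * (n + 1) := Nat.le_mul_of_pos_left _ (by omega)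
      omega
    refine ⟨(Q.map Prod.fst).map L,
      ⟨Q.map Prod.fst, Q.map Prod.snd, ⟨?_, ?_⟩, ⟨?_, ?_⟩, rfl, ?_, ?_⟩, ?_⟩
    · simpa using hQne
    · unfold List.Chain'; rw [List.isChain_map]; exact List.IsChain.imp (fun a b hab => hab.2.2.1) hQch
    · simpa using hQne
    · unfold List.Chain'; rw [List.isChain_map]; exact List.IsChain.imp (fun a b hab => hab.2.2.2) hQch
    · rw [List.map_map, List.map_map]
      exact List.map_congr_left (fun x hx => (hQV x hx).symm)
    · intro hc
      have h1 := congrArg List.getLast? hc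
      rw [List.getLast?_map, List.getLast?_map, hQlast] at h1
      simp only [Option.map_some] at h1
      exact hww' (by simpa using h1)
    · simpa using hQlen
end

section
/- Let G = (V,E) be a finite directed graph with n = |V| ≥ 1 vertices, and let G' be the {a}-labeled graph consisting of two disjoint copies of G, with every vertex labeled by the single character a. Then G has a Hamiltonian path if and only if the string a^n has two distinct occurrences in G' as directed paths (walks with pairwise distinct vertices). Consequently, G has a Hamiltonian path if and only if the maximum length of a string having two distinct path occurrences in G' equals n. -/
/-- `G` has a Hamiltonian path: a path visiting every vertex exactly once. -/
def HasHamPath {V : Type*} (E : V → V → Prop) : Prop :=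
  ∃ p : List V, IsWalk E p ∧ p.Nodup ∧ ∀ v : V, v ∈ p

/-- Edge relation of `G'`: two disjoint copies of `G`. -/
def TwoCopiesE {V : Type*} (E : V → V → Prop) : V ⊕ V → V ⊕ V → Prop :=
  fun x y =>
    (∃ x' y', x = Sum.inl x' ∧ y = Sum.inl y' ∧ E x' y') ∨
    (∃ x' y', x = Sum.inr x' ∧ y = Sum.inr y' ∧ E x' y')

/-- The string `S` has two distinct occurrences as directed paths
(walks with pairwise distinct vertices) in the graph `(W, E', L')`. -/
def TwoDistinctPathOcc {W σ : Type*} (E' : W → W → Prop) (L' : W → σ)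
    (S : List σ) : Prop :=
  ∃ p p' : List W, IsWalk E' p ∧ p.Nodup ∧ IsWalk E' p' ∧ p'.Nodup ∧
    p.map L' = S ∧ p'.map L' = S ∧ p ≠ p'

lemma side {V : Type*} (E : V → V → Prop) :
    ∀ p : List (V ⊕ V), p.Chain' (TwoCopiesE E) →
    (∃ q : List V, p = q.map Sum.inl ∧ q.Chain' E) ∨
    (∃ q : List V, p = q.map Sum.inr ∧ q.Chain' E) := by
  intro p
  induction p with
  | nil => intro _; exact Or.inl ⟨[], rfl, List.isChain_nil⟩
  | cons x rest ih =>
    intro hc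
    rw [List.Chain', List.isChain_cons] at hc
    obtain ⟨h1, h2⟩ := hc
    rcases ih h2 with ⟨q, rfl, hq⟩ | ⟨q, rfl, hq⟩
    · cases x with
      | inl v =>
        left
        refine ⟨v :: q, rfl, ?_⟩
        rw [List.Chain', List.isChain_cons]
        refine ⟨?_, hq⟩
        intro b hb
        cases q with
        | nil => simp at hb
        | cons w t =>
          have := h1 (Sum.inl w) (by simp)
          rcases this with ⟨x', y', hx, hy, he⟩ | ⟨x', y', hx, hy, he⟩
          · simp at hb hx hy; subst hb hx hy; exact he
          · simp at hx
      | inr v =>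
        cases q with
        | nil => right; exact ⟨[v], rfl, List.isChain_singleton v⟩
        | cons w t =>
          have := h1 (Sum.inl w) (by simp)
          rcases this with ⟨x', y', hx, hy, he⟩ | ⟨x', y', hx, hy, he⟩ <;> simp at hx hy
    · cases x with
      | inr v =>
        right
        refine ⟨v :: q, rfl, ?_⟩
        rw [List.Chain', List.isChain_cons]
        refine ⟨?_, hq⟩
        intro b hb
        cases q with
        | nil => simp at hb
        | cons w t =>
          have := h1 (Sum.inr w) (by simp)
          rcases this with ⟨x', y', hx, hy, he⟩ | ⟨x', y', hx, hy, he⟩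
          · simp at hx
          · simp at hb hx hy; subst hb hx hy; exact he
      | inl v =>
        cases q with
        | nil => left; exact ⟨[v], rfl, List.isChain_singleton v⟩
        | cons w t =>
          have := h1 (Sum.inr w) (by simp)
          rcases this with ⟨x', y', hx, hy, he⟩ | ⟨x', y', hx, hy, he⟩ <;> simp at hx hy


/-- let `G` be a finite directed graph with `n ≥ 1` vertices
and let `G'` be two disjoint copies of `G`, every vertex labeled `a`. Then
`G` has a Hamiltonian path iff `a^n` has two distinct path occurrences in
`G'`; consequently, `G` has a Hamiltonian path iff the maximum length of a
string with two distinct path occurrences in `G'` equals `n`. -/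
theorem stmt16 {V σ : Type*} [Fintype V] (E : V → V → Prop) (a : σ)
    (n : ℕ) (hn : Fintype.card V = n) (hn1 : 1 ≤ n) :
    (HasHamPath E ↔
      TwoDistinctPathOcc (TwoCopiesE E) (fun _ => a) (List.replicate n a)) ∧
    (HasHamPath E ↔
      ((∃ S : List σ, TwoDistinctPathOcc (TwoCopiesE E) (fun _ => a) S ∧
          S.length = n) ∧
        ∀ S : List σ, TwoDistinctPathOcc (TwoCopiesE E) (fun _ => a) S →
          S.length ≤ n)) := by
  classical
  -- length bound for any nodup walk in the two-copy graph
  have hbound : ∀ p : List (V ⊕ V), p.Chain' (TwoCopiesE E) → p.Nodup →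
      p.length ≤ n := by
    intro p hc hnd
    rcases side E p hc with ⟨q, rfl, _⟩ | ⟨q, rfl, _⟩ <;>
    · rw [List.length_map]
      have : q.Nodup := by
        rwa [List.nodup_map_iff (by intro x y h; simpa using h)] at hnd
      calc q.length ≤ Fintype.card V := this.length_le_card
        _ = n := hn
  have main : HasHamPath E ↔
      TwoDistinctPathOcc (TwoCopiesE E) (fun _ => a) (List.replicate n a) := by
    constructor
    · rintro ⟨p, ⟨hne, hc⟩, hnd, hall⟩
      have hlen : p.length = n := by
        rw [← hn]
        refine le_antisymm hnd.length_le_card ?_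
        calc Fintype.card V = Finset.univ.card := rfl
          _ ≤ p.toFinset.card :=
              Finset.card_le_card (fun v _ => List.mem_toFinset.mpr (hall v))
          _ ≤ p.length := p.toFinset_card_le
      have hchainl : (p.map Sum.inl).Chain' (TwoCopiesE E) := by
        rw [List.Chain', List.isChain_map]
        exact hc.imp (fun _ _ h => Or.inl ⟨_, _, rfl, rfl, h⟩)
      have hchainr : (p.map Sum.inr).Chain' (TwoCopiesE E) := by
        rw [List.Chain', List.isChain_map]
        exact hc.imp (fun _ _ h => Or.inr ⟨_, _, rfl, rfl, h⟩)
      refine ⟨p.map Sum.inl, p.map Sum.inr,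
        ⟨by simpa using hne, hchainl⟩, hnd.map Sum.inl_injective,
        ⟨by simpa using hne, hchainr⟩, hnd.map Sum.inr_injective,
        ?_, ?_, ?_⟩
      · rw [List.eq_replicate_iff]; simp [hlen]
      · rw [List.eq_replicate_iff]; simp [hlen]
      · cases p with
        | nil => exact absurd rfl hne
        | cons x t => simp
    · rintro ⟨p, p', ⟨hne, hc⟩, hnd, _, _, hmap, _, _⟩
      have hlen : p.length = n := by
        have := congrArg List.length hmap
        simpa using this
      rcases side E p hc with ⟨q, rfl, hq⟩ | ⟨q, rfl, hq⟩ <;>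
      · have hqnd : q.Nodup := by
          rwa [List.nodup_map_iff (by intro x y h; simpa using h)] at hnd
        have hqlen : q.length = Fintype.card V := by
          rw [hn]; simpa using hlen
        have hqne : q ≠ [] := by
          rintro rfl; rw [hn] at hqlen; simp at hqlen; omega
        refine ⟨q, ⟨hqne, hq⟩, hqnd, fun v => ?_⟩
        have huniv : q.toFinset = Finset.univ :=
          Finset.eq_univ_of_card _ (by rw [List.toFinset_card_of_nodup hqnd, hqlen])
        rw [← List.mem_toFinset, huniv]
        exact Finset.mem_univ v
  refine ⟨main, main.trans ⟨fun h => ⟨⟨List.replicate n a, h, by simp⟩, ?_⟩,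
    fun ⟨⟨S, hS, hSlen⟩, _⟩ => ?_⟩⟩
  · rintro S ⟨p, p', ⟨_, hc⟩, hnd, _, _, hmap, _, _⟩
    have := hbound p hc hnd
    rw [← hmap, List.length_map]
    exact this
  · obtain ⟨p, p', h1, h2, h3, h4, h5, h6, h7⟩ := hS
    have hSrep : S = List.replicate n a := by
      rw [← h5, List.map_const', ← hSlen, ← h5, List.length_map]
    rw [← hSrep]
    exact ⟨p, p', h1, h2, h3, h4, h5, h6, h7⟩
end

section
/- Let G = (V,E,L) be a Σ-labeled undirected graph, i.e., E ⊆ V × V is symmetric and irreflexive. Then G has a repeated string of length at least 2 (with occurrences as walks) if and only if G has an infinite repeated string. -/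
/-- a `Σ`-labeled undirected graph `G` (symmetric irreflexive
edge relation) has a repeated string of length at least `2` (with walk
occurrences) iff it has an infinite repeated string. -/
theorem stmt19 {V σ : Type*} (E : V → V → Prop) (L : V → σ)
    (hsymm : ∀ u v : V, E u v → E v u) (hirr : ∀ v : V, ¬ E v v) :
    (∃ S : List σ, Repeated E L S ∧ 2 ≤ S.length) ↔
    (∃ p p' : ℕ → V, IsInfWalk E p ∧ IsInfWalk E p' ∧ (∃ i, p i ≠ p' i) ∧
      ∀ i, L (p i) = L (p' i)) := by
  constructor
  · rintro ⟨S, ⟨p, p', hp, hp', hmap, hmap', hne⟩, hlen⟩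
    have hlp : p.length = S.length := by rw [← hmap, List.length_map]
    have hlp' : p'.length = S.length := by rw [← hmap', List.length_map]
    set n := S.length with hn
    set k := n - 1 with hk
    have hk1 : 1 ≤ k := by omega
    set g : ℕ → ℕ := fun i => if i ≤ k then i else if (i - k) % 2 = 1 then k - 1 else k
      with hg
    have hglt : ∀ i, g i < n := by
      intro i
      simp only [hg]
      split <;> [omega; (split <;> omega)]
    have hgp : ∀ i, g i < p.length := fun i => by rw [hlp]; exact hglt i
    have hgp' : ∀ i, g i < p'.length := fun i => by rw [hlp']; exact hglt i
    -- labels agree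
    have hlab : ∀ j (h : j < p.length) (h' : j < p'.length), L p[j] = L p'[j] := by
      intro j h h'
      have : (p.map L)[j]'(by simpa using h) = (p'.map L)[j]'(by simpa using h') := by
        simp [hmap, hmap']
      simpa using this
    -- edge facts
    have hchain : ∀ i (h : i < p.length - 1), E p[i] p[i+1] :=
      fun i h => List.isChain_iff_getElem.mp hp.2 i (by omega)
    have hchain' : ∀ i (h : i < p'.length - 1), E p'[i] p'[i+1] :=
      fun i h => List.isChain_iff_getElem.mp hp'.2 i (by omega)
    have hkk : k - 1 + 1 = k := by omega
    have hstep : ∀ (q : List V) (hq : q.length = S.length)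
        (hc : ∀ i (h : i < q.length - 1), E q[i] q[i+1]),
        ∀ i, E (q[g i]'(by rw [hq]; exact hglt i)) (q[g (i+1)]'(by rw [hq]; exact hglt _)) := by
      intro q hq hc i
      have hql : q.length = n := hq
      rcases Nat.lt_or_ge (i + 1) (k + 1) with h1 | h1
      · -- i + 1 ≤ k
        have e1 : g i = i := by simp only [hg]; rw [if_pos (by omega)]
        have e2 : g (i+1) = i + 1 := by simp only [hg]; rw [if_pos (by omega)]
        have := hc i (by omega)
        simp_rw [e1, e2]
        exact this
      · have hedge : E (q[k-1]'(by omega)) (q[k]'(by omega)) := by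
          have := hc (k-1) (by omega)
          simpa [hkk] using this
        rcases Nat.lt_or_ge i (k + 1) with h2 | h2
        · -- i = k
          have hik : i = k := by omega
          have e1 : g i = k := by simp only [hg]; rw [if_pos (by omega)]; omega
          have e2 : g (i+1) = k - 1 := by
            simp only [hg]; rw [if_neg (by omega), if_pos (by omega)]
          simp_rw [e1, e2]
          exact hsymm _ _ hedge
        · -- i > k
          rcases Nat.even_or_odd (i - k) with he | ho
          · have h0 : (i - k) % 2 = 0 := Nat.even_iff.mp he
            have e1 : g i = k := by
              simp only [hg]; rw [if_neg (by omega), if_neg (by omega)]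
            have e2 : g (i+1) = k - 1 := by
              simp only [hg]; rw [if_neg (by omega), if_pos ?_]
              have : (i + 1 - k) = (i - k) + 1 := by omega
              rw [this, Nat.add_mod, h0]
            simp_rw [e1, e2]
            exact hsymm _ _ hedge
          · have e1 : g i = k - 1 := by
              simp only [hg]; rw [if_neg (by omega), if_pos (Nat.odd_iff.mp ho)]
            have e2 : g (i+1) = k := by
              simp only [hg]; rw [if_neg (by omega), if_neg ?_]
              have : (i + 1 - k) = (i - k) + 1 := by omega
              rw [this, Nat.add_mod, Nat.odd_iff.mp ho]
              simp
            simp_rw [e1, e2]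
            exact hedge
    refine ⟨fun i => p[g i]'(hgp i), fun i => p'[g i]'(hgp' i),
      fun i => hstep p hlp hchain i, fun i => hstep p' hlp' hchain' i, ?_, ?_⟩
    · by_contra hall
      push_neg at hall
      apply hne
      apply List.ext_getElem (by omega)
      intro j hj hj'
      have hjk : j ≤ k := by omega
      have := hall j
      have e1 : g j = j := by simp only [hg]; rw [if_pos hjk]
      simp_rw [e1] at this
      exact this
    · intro i
      exact hlab (g i) (hgp i) (hgp' i)
  · rintro ⟨p, p', hp, hp', ⟨i, hi⟩, hL⟩
    set N := i + 1 with hN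
    refine ⟨(List.range (N+1)).map (L ∘ p), ⟨(List.range (N+1)).map p,
      (List.range (N+1)).map p', ⟨by simp, ?_⟩, ⟨by simp, ?_⟩, ?_, ?_, ?_⟩, by simp; omega⟩
    · refine List.isChain_iff_getElem.mpr ?_
      intro j hj
      simp only [List.length_map, List.length_range] at hj ⊢
      simp only [List.get_eq_getElem, List.getElem_map, List.getElem_range]
      exact hp j
    · refine List.isChain_iff_getElem.mpr ?_
      intro j hj
      simp only [List.length_map, List.length_range] at hj ⊢
      simp only [List.get_eq_getElem, List.getElem_map, List.getElem_range]
      exact hp' j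
    · rw [List.map_map]
    · rw [List.map_map]
      apply List.map_congr_left
      intro a _
      exact (hL a).symm
    · intro h
      exact hi (List.map_inj_left.mp h i (by simp; omega))
end
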